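/- arXiv:2008.13720 — 3 statements merged into one kernel-verified Lean document; each statement's English description precedes it below -/
import Mathlib

section
/- Let k ≥ 1 and let x = (x¹,…,x^{k+1}) and y = (y¹,…,y^{k+1}) in (ℝ²)^{k+1} be non-degenerate configurations. Then x and y have the same area type (that is, x^i·x^{j⊥} = y^i·y^{j⊥} for all 1 ≤ i < j ≤ k+1) if and only if there exists a unique g ∈ SL₂(ℝ) such that y^i = g x^i for every i = 1,…,k+1. -/
/-
The signed area is, up to sign, a determinant, so `SL₂(ℝ)` preserves it; conversely, a non-degenerate pair
`(x¹, x²)` can be sent to any pair with the same area by `g = Y X⁻¹`, where `X`, `Y` have these pairs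
as columns, and `det g = 1` precisely because the areas agree. Every further point is then forced,
because a point is determined by its areas against a non-degenerate pair; the same fact makes `g`
unique, since `g` is determined by its values on a basis.
-/

open MeasureTheory Real
open scoped ENNReal

noncomputable section

/-- The plane `ℝ²` with the Euclidean norm. -/
abbrev Plane : Type := EuclideanSpace ℝ (Fin 2)

/-- The point `(a, b) ∈ ℝ²`. -/
def e2 (a b : ℝ) : Plane := (WithLp.equiv 2 (Fin 2 → ℝ)).symm ![a, b]

/-- The signed area `x · y^⊥`, where `y^⊥ = (−y₂, y₁)`. -/
def sarea (x y : Plane) : ℝ := x 0 * (-(y 1)) + x 1 * y 0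

/-- The action of `SL₂(ℝ)` on `ℝ²` by matrix-vector multiplication. -/
def SL2act (g : Matrix.SpecialLinearGroup (Fin 2) ℝ) (v : Plane) : Plane :=
  (WithLp.equiv 2 (Fin 2 → ℝ)).symm
    (Matrix.mulVec (g : Matrix (Fin 2) (Fin 2) ℝ) ((WithLp.equiv 2 (Fin 2 → ℝ)) v))

open Matrix

lemma SL2act_apply (g : SpecialLinearGroup (Fin 2) ℝ) (v : Plane) (i : Fin 2) :
    SL2act g v i = (g : Matrix (Fin 2) (Fin 2) ℝ) i 0 * v 0
      + (g : Matrix (Fin 2) (Fin 2) ℝ) i 1 * v 1 := by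
  change ((g : Matrix (Fin 2) (Fin 2) ℝ) *ᵥ fun j => v j) i = _
  simp [mulVec, dotProduct, Fin.sum_univ_two]

lemma sarea_self (v : Plane) : sarea v v = 0 := by
  simp only [sarea]; ring

lemma sarea_swap (u v : Plane) : sarea v u = -sarea u v := by
  simp only [sarea]; ring

lemma sarea_SL2act (g : SpecialLinearGroup (Fin 2) ℝ) (u v : Plane) :
    sarea (SL2act g u) (SL2act g v) = sarea u v := by
  have hdet := g.prop
  rw [det_fin_two] at hdet
  simp only [sarea, SL2act_apply]
  linear_combination (u 1 * v 0 - u 0 * v 1) * hdet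

lemma eq_of_sarea_eq {a b v w : Plane} (hab : sarea a b ≠ 0)
    (ha : sarea a v = sarea a w) (hb : sarea b v = sarea b w) : v = w := by
  simp only [sarea] at ha hb hab
  refine PiLp.ext (Fin.forall_fin_two.2 ⟨?_, ?_⟩)
  · exact mul_left_cancel₀ hab (by linear_combination b 0 * ha - a 0 * hb)
  · exact mul_left_cancel₀ hab (by linear_combination b 1 * ha - a 1 * hb)

lemma SL2act_injective : Function.Injective SL2act := by
  intro g h hgh
  have col0 := fun i => congrArg (· i) (congrFun hgh (e2 1 0))
  have col1 := fun i => congrArg (· i) (congrFun hgh (e2 0 1))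
  simp only [e2, WithLp.equiv_symm_apply, SL2act_apply, cons_val_zero, cons_val_one,
    cons_val_fin_one, mul_one, mul_zero, add_zero, zero_add, Fin.forall_fin_two] at col0 col1
  exact Subtype.ext <| Matrix.ext <| Fin.forall_fin_two.2
    ⟨Fin.forall_fin_two.2 ⟨col0.1, col1.1⟩, Fin.forall_fin_two.2 ⟨col0.2, col1.2⟩⟩

lemma eq_of_SL2act_eq_of_sarea_ne_zero {g h : SpecialLinearGroup (Fin 2) ℝ} {u v : Plane}
    (huv : sarea u v ≠ 0) (hu : SL2act g u = SL2act h u) (hv : SL2act g v = SL2act h v) :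
    g = h := by
  refine SL2act_injective <| funext fun w => eq_of_sarea_eq (a := SL2act g u) (b := SL2act g v) ?_ ?_ ?_
  · rwa [sarea_SL2act]
  · rw [sarea_SL2act, hu, sarea_SL2act]
  · rw [sarea_SL2act, hv, sarea_SL2act]

def pairMatrix (u v : Plane) : Matrix (Fin 2) (Fin 2) ℝ := !![u 0, v 0; u 1, v 1]

lemma det_pairMatrix (u v : Plane) : (pairMatrix u v).det = -sarea u v := by
  rw [pairMatrix, det_fin_two_of, sarea]; ring

lemma SL2act_eq_mul_pairMatrix (g : SpecialLinearGroup (Fin 2) ℝ) (u v : Plane) (i : Fin 2) :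
    SL2act g u i = ((g : Matrix (Fin 2) (Fin 2) ℝ) * pairMatrix u v) i 0 ∧
      SL2act g v i = ((g : Matrix (Fin 2) (Fin 2) ℝ) * pairMatrix u v) i 1 := by
  simp [SL2act_apply, mul_apply, Fin.sum_univ_two, pairMatrix]

lemma exists_SL2act_eq_of_sarea_eq {u v u' v' : Plane} (huv : sarea u v ≠ 0)
    (h : sarea u v = sarea u' v') :
    ∃ g : SpecialLinearGroup (Fin 2) ℝ, SL2act g u = u' ∧ SL2act g v = v' := by
  have hX : IsUnit (pairMatrix u v).det := by
    rw [det_pairMatrix]; exact (neg_ne_zero.2 huv).isUnit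
  have hdet : (pairMatrix u' v' * (pairMatrix u v)⁻¹).det = 1 := by
    rw [det_mul, det_nonsing_inv, Ring.inverse_eq_inv', det_pairMatrix, det_pairMatrix, ← h]
    exact mul_inv_cancel₀ (neg_ne_zero.2 huv)
  let g : SpecialLinearGroup (Fin 2) ℝ := ⟨_, hdet⟩
  have hg : (g : Matrix (Fin 2) (Fin 2) ℝ) * pairMatrix u v = pairMatrix u' v' :=
    nonsing_inv_mul_cancel_right _ _ hX
  refine ⟨g, PiLp.ext fun i => ?_, PiLp.ext fun i => ?_⟩
  · rw [(SL2act_eq_mul_pairMatrix g u v i).1, hg]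
    fin_cases i <;> rfl
  · rw [(SL2act_eq_mul_pairMatrix g u v i).2, hg]
    fin_cases i <;> rfl

lemma sarea_eq_of_forall_lt {ι : Type*} [LinearOrder ι] {x y : ι → Plane}
    (h : ∀ i j, i < j → sarea (x i) (x j) = sarea (y i) (y j)) (i j : ι) :
    sarea (x i) (x j) = sarea (y i) (y j) := by
  rcases lt_trichotomy i j with hij | rfl | hij
  · exact h i j hij
  · rw [sarea_self, sarea_self]
  · rw [sarea_swap, h j i hij, ← sarea_swap]

theorem statement2_general (k : ℕ) (x y : Fin (k + 1) → Plane)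
    (hx : sarea (x 0) (x 1) ≠ 0) :
    (∀ i j : Fin (k + 1), i < j → sarea (x i) (x j) = sarea (y i) (y j)) ↔
      (∃! g : Matrix.SpecialLinearGroup (Fin 2) ℝ, ∀ i, y i = SL2act g (x i)) := by
  constructor
  · intro h
    have harea := sarea_eq_of_forall_lt h
    obtain ⟨g, hg0, hg1⟩ := exists_SL2act_eq_of_sarea_eq hx (harea 0 1)
    have hgx : ∀ i, y i = SL2act g (x i) := fun i =>
      eq_of_sarea_eq (a := y 0) (b := y 1) (by rwa [← hg0, ← hg1, sarea_SL2act])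
        (by rw [← hg0, sarea_SL2act, harea, hg0]) (by rw [← hg1, sarea_SL2act, harea, hg1])
    refine ⟨g, hgx, fun g' hg' => eq_of_SL2act_eq_of_sarea_ne_zero hx ?_ ?_⟩
    · exact (hg' 0).symm.trans (hgx 0)
    · exact (hg' 1).symm.trans (hgx 1)
  · rintro ⟨g, hg, -⟩ i j -
    rw [hg i, hg j, sarea_SL2act]

/-- Two non-degenerate `(k+1)`-point configurations `x, y` in `ℝ²` have the same
area type (i.e. `x^i·x^{j⊥} = y^i·y^{j⊥}` for all `i < j`) if and only if there is a
unique `g ∈ SL₂(ℝ)` with `y^i = g x^i` for every `i`. -/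
theorem statement2 (k : ℕ) (hk : 1 ≤ k) (x y : Fin (k + 1) → Plane)
    (hx : sarea (x 0) (x 1) ≠ 0) (hy : sarea (y 0) (y 1) ≠ 0) :
    (∀ i j : Fin (k + 1), i < j → sarea (x i) (x j) = sarea (y i) (y j)) ↔
      (∃! g : Matrix.SpecialLinearGroup (Fin 2) ℝ, ∀ i, y i = SL2act g (x i)) :=
  statement2_general k x y hx
end
end

section
/- For each integer k ≥ 1 there is a constant C_k, depending only on k, with the following property: for every integer q ≥ 2, letting P_q = {(r cos(πm/(2q)), r sin(πm/(2q))) : r, m ∈ ℤ, q/2 ≤ r ≤ q, 0 ≤ m ≤ q} ⊂ ℝ², the number of distinct area types of (k+1)-point configurations with all points in P_q, i.e. the cardinality of the set {(x^i·x^{j⊥})_{1≤i<j≤k+1} : x¹,…,x^{k+1} ∈ P_q} ⊂ ℝ^{k(k+1)/2}, is at most C_k q^{2k+1}. -/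
/-!
Writing the points of `P_q` in polar form as `r (cos θ, sin θ)`, the area `x · y^⊥` of two of
them is `r s sin (θ - θ')`. So the area type of `x¹, …, x^{k+1}` is determined by the `k + 1`
radii, integers in `[0, q]`, and the `k` angle differences `m_i - m_1`, integers in `[-q, q]`.
This gives at most `(q + 1)^{k+1} (2q + 1)^k ≤ 2^{k+1} 3^k q^{2k+1}` area types.
-/

open MeasureTheory Real
open scoped ENNReal

noncomputable section

/-- `P_q = {(r cos(πm/(2q)), r sin(πm/(2q))) : r, m ∈ ℤ, q/2 ≤ r ≤ q, 0 ≤ m ≤ q}`, the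
image of the lattice points `ℤ² ∩ ([q/2, q] × [0, q])` under
`(r, m) ↦ (r cos(πm/(2q)), r sin(πm/(2q)))`. -/
def Pq (q : ℕ) : Set Plane :=
  {p | ∃ r m : ℤ, (q : ℝ) / 2 ≤ (r : ℝ) ∧ (r : ℝ) ≤ q ∧ 0 ≤ m ∧ (m : ℝ) ≤ q ∧
    p = e2 ((r : ℝ) * Real.cos (Real.pi * m / (2 * q)))
           ((r : ℝ) * Real.sin (Real.pi * m / (2 * q)))}

/-- The set of area types `(x^i·x^{j⊥})_{i<j} ∈ ℝ^{k(k+1)/2}` of `(k+1)`-point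
configurations with all points in `S ⊆ ℝ²`, indexed by the pairs `i < j`. -/
def areaTypes (k : ℕ) (S : Set Plane) :
    Set ({p : Fin (k + 1) × Fin (k + 1) // p.1 < p.2} → ℝ) :=
  {v | ∃ x : Fin (k + 1) → Plane, (∀ i, x i ∈ S) ∧
    ∀ p, v p = sarea (x p.1.1) (x p.1.2)}

lemma finite_and_ncard_le_card_of_subset_image {α β : Type*} {s : Set β} {f : α → β}
    {t : Finset α} (h : s ⊆ f '' t) : s.Finite ∧ s.ncard ≤ t.card := by
  have himage : (f '' t).Finite := t.finite_toSet.image f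
  refine ⟨himage.subset h, ?_⟩
  calc s.ncard ≤ (f '' t).ncard := Set.ncard_le_ncard h himage
    _ ≤ (t : Set α).ncard := Set.ncard_image_le t.finite_toSet
    _ = t.card := Set.ncard_coe_finset t

lemma sarea_e2_polar (r s a b : ℝ) :
    sarea (e2 (r * cos a) (r * sin a)) (e2 (s * cos b) (s * sin b)) = r * s * sin (a - b) := by
  simp only [sarea, e2, WithLp.equiv_symm_apply, PiLp.toLp_apply, Matrix.cons_val_zero,
    Matrix.cons_val_one, sin_sub]
  ring

/-- The area type of the points with radii `r i` and angles `π m i / (2q)`, where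
`d = (m 1 - m 0, …, m k - m 0)`: areas only see differences of angles. -/
def polarAreaType (q k : ℕ) (r : Fin (k + 1) → ℤ) (d : Fin k → ℤ)
    (p : {p : Fin (k + 1) × Fin (k + 1) // p.1 < p.2}) : ℝ :=
  let m : Fin (k + 1) → ℤ := Fin.cons 0 d
  r p.1.1 * r p.1.2 * sin (π * ((m p.1.1 - m p.1.2 : ℤ) : ℝ) / (2 * q))

def polarParams (q k : ℕ) : Finset ((Fin (k + 1) → ℤ) × (Fin k → ℤ)) :=
  Finset.Icc (fun _ => 0) (fun _ => (q : ℤ)) ×ˢ Finset.Icc (fun _ => -(q : ℤ)) (fun _ => (q : ℤ))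

lemma card_polarParams (q k : ℕ) :
    (polarParams q k).card = (q + 1) ^ (k + 1) * (2 * q + 1) ^ k := by
  rw [polarParams, Finset.card_product, Pi.card_Icc, Pi.card_Icc]
  simp only [Int.card_Icc, Finset.prod_const, Finset.card_univ, Fintype.card_fin]
  congr 2; omega

lemma areaTypes_Pq_subset (q k : ℕ) :
    areaTypes k (Pq q) ⊆
      (fun rd : (Fin (k + 1) → ℤ) × (Fin k → ℤ) => polarAreaType q k rd.1 rd.2) ''
        polarParams q k := by
  rintro v ⟨x, hx, hv⟩
  choose r m hr_ge hr_le hm0 hm_le hx using hx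
  have hr0 : ∀ i, 0 ≤ r i := fun i => by
    have : (0 : ℝ) ≤ r i := le_trans (by positivity) (hr_ge i)
    exact_mod_cast this
  have hrq : ∀ i, r i ≤ q := fun i => by exact_mod_cast hr_le i
  have hmq : ∀ i, m i ≤ q := fun i => by exact_mod_cast hm_le i
  set d : Fin k → ℤ := fun j => m j.succ - m 0
  have hd : ∀ i, (Fin.cons 0 d : Fin (k + 1) → ℤ) i = m i - m 0 :=
    Fin.cases (by simp) (fun j => by simp [d])
  refine ⟨(r, d), ?_, funext fun ⟨(i, j), hij⟩ => ?_⟩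
  · simp only [polarParams, Finset.coe_product, Set.mem_prod, Finset.coe_Icc, Set.mem_Icc,
      Pi.le_def]
    refine ⟨⟨hr0, hrq⟩, fun j => ?_, fun j => ?_⟩
    · linarith [hm0 j.succ, hmq 0]
    · linarith [hm0 0, hmq j.succ]
  · rw [hv, hx i, hx j, sarea_e2_polar]
    simp only [polarAreaType, hd]
    push_cast
    ring_nf

lemma card_polarParams_le (q k : ℕ) (hq : 1 ≤ q) :
    (polarParams q k).card ≤ 2 ^ (k + 1) * 3 ^ k * q ^ (2 * k + 1) :=
  calc (polarParams q k).card = (q + 1) ^ (k + 1) * (2 * q + 1) ^ k := card_polarParams q k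
    _ ≤ (2 * q) ^ (k + 1) * (3 * q) ^ k := by gcongr <;> omega
    _ = 2 ^ (k + 1) * 3 ^ k * q ^ (2 * k + 1) := by ring

theorem statement17_general (k : ℕ) :
    ∃ Ck : ℝ, 0 < Ck ∧ ∀ q : ℕ, 2 ≤ q →
      (areaTypes k (Pq q)).Finite ∧
      ((areaTypes k (Pq q)).ncard : ℝ) ≤ Ck * (q : ℝ) ^ (2 * k + 1) := by
  refine ⟨2 ^ (k + 1) * 3 ^ k, by positivity, fun q hq => ?_⟩
  obtain ⟨hfin, hcard⟩ := finite_and_ncard_le_card_of_subset_image (areaTypes_Pq_subset q k)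
  exact ⟨hfin, by exact_mod_cast hcard.trans (card_polarParams_le q k (by omega))⟩

/-- For each `k ≥ 1` there is a constant `C_k`, depending only on `k`, such that for
every `q ≥ 2` the number of distinct area types of `(k+1)`-point configurations with
all points in `P_q` is at most `C_k q^{2k+1}`. -/
theorem statement17 (k : ℕ) (hk : 1 ≤ k) :
    ∃ Ck : ℝ, 0 < Ck ∧ ∀ q : ℕ, 2 ≤ q →
      (areaTypes k (Pq q)).Finite ∧
      ((areaTypes k (Pq q)).ncard : ℝ) ≤ Ck * (q : ℝ) ^ (2 * k + 1) :=
  statement17_general k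
end
end

section
/- Let k ≥ 1 be an integer and 0 < s < 2. There is a constant C′_k, depending only on k, such that for every integer q ≥ 2 the following holds. Let Λ_{q,s} ⊂ ℝ² be the closed q^{−2/s}-neighborhood of the lattice points (1/q)ℤ² ∩ ([1/2,1]×[0,1]), let ψ(a,b) = (a cos(πb/2), a sin(πb/2)), and let E_{q,s} = ψ(Λ_{q,s} ∩ ([1/2,1]×[0,1])). Then the set of area types {(x^i·x^{j⊥})_{1≤i<j≤k+1} : x¹,…,x^{k+1} ∈ E_{q,s}} ⊂ ℝ^{k(k+1)/2} can be covered by at most C′_k q^{2k+1} Euclidean balls of radius C′_k q^{−2/s}. -/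
open MeasureTheory Real
open scoped ENNReal

noncomputable section

/-- The lattice points `(1/q)ℤ² ∩ ([1/2, 1] × [0, 1])`. -/
def latticePts (q : ℕ) : Set Plane :=
  {p | ∃ a b : ℤ, p = e2 ((a : ℝ) / q) ((b : ℝ) / q) ∧
    1 / 2 ≤ (a : ℝ) / q ∧ (a : ℝ) / q ≤ 1 ∧ 0 ≤ (b : ℝ) / q ∧ (b : ℝ) / q ≤ 1}

/-- `Λ_{q,s}`: the closed `q^{−2/s}`-neighborhood of `(1/q)ℤ² ∩ ([1/2, 1] × [0, 1])`. -/
def Lambda (q : ℕ) (s : ℝ) : Set Plane :=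
  Metric.cthickening ((q : ℝ) ^ (-2 / s)) (latticePts q)

/-- The polar-type map `ψ(a, b) = (a cos(πb/2), a sin(πb/2))`. -/
def psiMap (v : Plane) : Plane :=
  e2 (v 0 * Real.cos (Real.pi * v 1 / 2)) (v 0 * Real.sin (Real.pi * v 1 / 2))

/-- The rectangle `Q = [1/2, 1] × [0, 1] ⊆ ℝ²`. -/
def Qrect : Set Plane := {v | 1 / 2 ≤ v 0 ∧ v 0 ≤ 1 ∧ 0 ≤ v 1 ∧ v 1 ≤ 1}

/-- `E_{q,s} = ψ(Λ_{q,s} ∩ ([1/2, 1] × [0, 1]))`. -/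
def Eqs (q : ℕ) (s : ℝ) : Set Plane := psiMap '' (Lambda q s ∩ Qrect)

/-- The set of area types `(x^i·x^{j⊥})_{i<j}` of `(k+1)`-point configurations with all
points in `S ⊆ ℝ²`, viewed in the Euclidean space `ℝ^{k(k+1)/2}` indexed by pairs
`i < j`. -/
def areaTypesE (k : ℕ) (S : Set Plane) :
    Set (EuclideanSpace ℝ {p : Fin (k + 1) × Fin (k + 1) // p.1 < p.2}) :=
  {v | ∃ x : Fin (k + 1) → Plane, (∀ i, x i ∈ S) ∧
    ∀ p, v p = sarea (x p.1.1) (x p.1.2)}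

/-! Each point of `Λ_{q,s} ∩ Q` lies within `2 q^{-2/s}` of a lattice point `(a/q, b/q)`, and
`ψ(r, t) · ψ(r', t')^⊥ = r r' sin (π (t - t') / 2)` is Lipschitz in `(r, t, r', t')` for
`|r|, |r'| ≤ 1`. So every area type of a configuration in `E_{q,s}` is `O(q^{-2/s})`-close to the
area type of a lattice configuration `(a_i/q, b_i/q)_i`. That area type depends only on the
numerators `a_i` and on the differences `b_i - b_0`, which leaves `O(q^{k+1} · q^k)` centres. -/

abbrev AreaIdx (k : ℕ) : Type := {p : Fin (k + 1) × Fin (k + 1) // p.1 < p.2}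

def areaType {k : ℕ} (x : Fin (k + 1) → Plane) : EuclideanSpace ℝ (AreaIdx k) :=
  WithLp.toLp 2 fun p => sarea (x p.1.1) (x p.1.2)

@[simp] lemma e2_apply_zero (a b : ℝ) : e2 a b 0 = a := rfl

@[simp] lemma e2_apply_one (a b : ℝ) : e2 a b 1 = b := rfl

lemma sarea_psiMap (u v : Plane) :
    sarea (psiMap u) (psiMap v) = u 0 * v 0 * sin (π / 2 * (u 1 - v 1)) := by
  rw [show π / 2 * (u 1 - v 1) = π * u 1 / 2 - π * v 1 / 2 by ring, sin_sub]
  simp only [sarea, psiMap, e2_apply_zero, e2_apply_one]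
  ring

lemma abs_mul_mul_sin_sub_mul_mul_sin_le {r r' ρ ρ' θ θ' : ℝ}
    (hr' : |r'| ≤ 1) (hρ : |ρ| ≤ 1) (hρ' : |ρ'| ≤ 1) :
    |r * r' * sin θ - ρ * ρ' * sin θ'| ≤ |r - ρ| + |r' - ρ'| + |θ - θ'| := by
  have hsin : |sin θ| ≤ 1 := abs_sin_le_one θ
  calc |r * r' * sin θ - ρ * ρ' * sin θ'|
      = |(r - ρ) * r' * sin θ + ρ * (r' - ρ') * sin θ + ρ * ρ' * (sin θ - sin θ')| := by
        ring_nf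
    _ ≤ |r - ρ| * |r'| * |sin θ| + |ρ| * |r' - ρ'| * |sin θ|
          + |ρ| * |ρ'| * |sin θ - sin θ'| := by
        simp only [← abs_mul]
        exact abs_add_three _ _ _
    _ ≤ |r - ρ| * 1 * 1 + 1 * |r' - ρ'| * 1 + 1 * 1 * |θ - θ'| := by
        have := abs_sin_sub_sin_le θ θ'
        gcongr
    _ = |r - ρ| + |r' - ρ'| + |θ - θ'| := by ring

lemma abs_sarea_psiMap_sub_le {u v u' v' : Plane}
    (hv : |v 0| ≤ 1) (hu' : |u' 0| ≤ 1) (hv' : |v' 0| ≤ 1) :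
    |sarea (psiMap u) (psiMap v) - sarea (psiMap u') (psiMap v')|
      ≤ 3 * (dist u u' + dist v v') := by
  have hcoord (x y : Plane) (i : Fin 2) : |x i - y i| ≤ dist x y := by
    simpa only [Real.dist_eq] using PiLp.dist_apply_le x y i
  have hangle : |π / 2 * (u 1 - v 1) - π / 2 * (u' 1 - v' 1)|
      ≤ 2 * (dist u u' + dist v v') := by
    rw [← mul_sub, abs_mul, abs_of_pos (by positivity),
      show u 1 - v 1 - (u' 1 - v' 1) = (u 1 - u' 1) - (v 1 - v' 1) by ring]
    calc π / 2 * |(u 1 - u' 1) - (v 1 - v' 1)| ≤ 2 * (|u 1 - u' 1| + |v 1 - v' 1|) := by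
          gcongr
          · linarith [pi_le_four]
          · exact abs_sub _ _
      _ ≤ 2 * (dist u u' + dist v v') := by gcongr <;> exact hcoord _ _ 1
  rw [sarea_psiMap, sarea_psiMap]
  refine (abs_mul_mul_sin_sub_mul_mul_sin_le hv hu' hv').trans ?_
  linarith [hcoord u u' 0, hcoord v v' 0]

lemma EuclideanSpace.dist_le_sqrt_card_mul {ι : Type*} [Fintype ι]
    {x y : EuclideanSpace ℝ ι} {C : ℝ} (hC : 0 ≤ C) (h : ∀ i, |x i - y i| ≤ C) :
    dist x y ≤ √(Fintype.card ι) * C := by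
  rw [EuclideanSpace.dist_eq]
  calc √(∑ i, dist (x i) (y i) ^ 2) ≤ √(∑ _i : ι, C ^ 2) := by
        gcongr with i
        exact (Real.dist_eq _ _).trans_le (h i)
    _ = √(Fintype.card ι) * C := by
        rw [Finset.sum_const, Finset.card_univ, nsmul_eq_mul, sqrt_mul (Nat.cast_nonneg _),
          sqrt_sq hC]

lemma dist_areaType_psiMap_le {k : ℕ} {u w : Fin (k + 1) → Plane} {ε : ℝ}
    (hu : ∀ i, |u i 0| ≤ 1) (hw : ∀ i, |w i 0| ≤ 1) (h : ∀ i, dist (u i) (w i) ≤ ε) :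
    dist (areaType (psiMap ∘ u)) (areaType (psiMap ∘ w))
      ≤ √(Fintype.card (AreaIdx k)) * (6 * ε) :=
  EuclideanSpace.dist_le_sqrt_card_mul (by linarith [dist_nonneg.trans (h 0)]) fun p => by
    have := abs_sarea_psiMap_sub_le (u := u p.1.1) (hu p.1.2) (hw p.1.1) (hw p.1.2)
    simp only [areaType, PiLp.toLp_apply, Function.comp_apply]
    linarith [h p.1.1, h p.1.2]

lemma exists_latticePts_dist_lt {q : ℕ} {s : ℝ} (hq : 0 < q) {u : Plane}
    (hu : u ∈ Lambda q s) :
    ∃ a b : ℤ, a ∈ Finset.Icc 0 (q : ℤ) ∧ b ∈ Finset.Icc 0 (q : ℤ) ∧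
      dist u (e2 (a / q) (b / q)) < 2 * (q : ℝ) ^ (-2 / s) := by
  have hq' : (0 : ℝ) < q := by exact_mod_cast hq
  have hδ : 0 < (q : ℝ) ^ (-2 / s) := rpow_pos_of_pos hq' _
  obtain ⟨_, ⟨a, b, rfl, ha, ha', hb, hb'⟩, hdist⟩ := Metric.mem_thickening_iff.1
    (Metric.cthickening_subset_thickening' (δ₂ := 2 * (q : ℝ) ^ (-2 / s)) (by positivity)
      (by linarith) _ hu)
  rw [le_div_iff₀ hq'] at ha hb
  rw [div_le_one hq'] at ha' hb'
  have ha0 : (0 : ℝ) ≤ a := by linarith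
  have hb0 : (0 : ℝ) ≤ b := by linarith
  exact ⟨a, b, Finset.mem_Icc.2 ⟨by exact_mod_cast ha0, by exact_mod_cast ha'⟩,
    Finset.mem_Icc.2 ⟨by exact_mod_cast hb0, by exact_mod_cast hb'⟩, hdist⟩

def latticeAreaType {k : ℕ} (q : ℕ) (a b : Fin (k + 1) → ℤ) :
    EuclideanSpace ℝ (AreaIdx k) :=
  areaType fun i => psiMap (e2 (a i / q) (b i / q))

lemma latticeAreaType_congr_sub {k q : ℕ} (a : Fin (k + 1) → ℤ) {b b' : Fin (k + 1) → ℤ}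
    (h : ∀ i j, b i - b j = b' i - b' j) : latticeAreaType q a b = latticeAreaType q a b' := by
  ext p
  simp only [latticeAreaType, areaType, PiLp.toLp_apply, sarea_psiMap, e2_apply_zero,
    e2_apply_one, ← sub_div]
  exact_mod_cast congr_arg (fun n : ℤ => a p.1.1 / q * (a p.1.2 / q) * sin (π / 2 * (n / q)))
    (h p.1.1 p.1.2)

/-- By `latticeAreaType_congr_sub` only `b - b 0 = Fin.cons 0 d` matters, `d ∈ [-q, q]^k`. -/
def latticeCenters (k q : ℕ) : Finset (EuclideanSpace ℝ (AreaIdx k)) :=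
  (Fintype.piFinset (fun _ : Fin (k + 1) => Finset.Icc (0 : ℤ) q) ×ˢ
      Fintype.piFinset (fun _ : Fin k => Finset.Icc (-(q : ℤ)) q)).image
    fun ad => latticeAreaType q ad.1 (Fin.cons 0 ad.2)

lemma card_latticeCenters_le (k : ℕ) {q : ℕ} (hq : 0 < q) :
    ((latticeCenters k q).card : ℝ) ≤ 3 ^ (2 * k + 1) * (q : ℝ) ^ (2 * k + 1) := by
  have hcard : (latticeCenters k q).card ≤ (3 * q) ^ (2 * k + 1) :=
    calc (latticeCenters k q).card ≤ (q + 1) ^ (k + 1) * (2 * q + 1) ^ k := by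
          refine Finset.card_image_le.trans_eq ?_
          simp only [Finset.card_product, Fintype.card_piFinset_const, Int.card_Icc]
          congr 2; omega
      _ ≤ (3 * q) ^ (k + 1) * (3 * q) ^ k := by gcongr <;> omega
      _ = (3 * q) ^ (2 * k + 1) := by ring
  rw [← mul_pow]
  exact_mod_cast hcard

lemma latticeAreaType_mem_latticeCenters {k q : ℕ} {a b : Fin (k + 1) → ℤ}
    (ha : ∀ i, a i ∈ Finset.Icc 0 (q : ℤ)) (hb : ∀ i, b i ∈ Finset.Icc 0 (q : ℤ)) :
    latticeAreaType q a b ∈ latticeCenters k q := by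
  have hcons : ∀ i, (Fin.cons 0 (fun i => b i.succ - b 0) : Fin (k + 1) → ℤ) i = b i - b 0 :=
    Fin.cases (by simp) (by simp)
  refine Finset.mem_image.2 ⟨(a, fun i => b i.succ - b 0), Finset.mem_product.2
    ⟨Fintype.mem_piFinset.2 ha, Fintype.mem_piFinset.2 fun i => ?_⟩,
    latticeAreaType_congr_sub a fun i j => ?_⟩
  · show b i.succ - b 0 ∈ _
    have := Finset.mem_Icc.1 (hb i.succ)
    have := Finset.mem_Icc.1 (hb 0)
    exact Finset.mem_Icc.2 ⟨by omega, by omega⟩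
  · rw [hcons, hcons]
    ring

theorem statement19_general (k : ℕ) :
    ∃ C' : ℝ, 0 < C' ∧
      ∀ s : ℝ, 0 < s → s < 2 → ∀ q : ℕ, 2 ≤ q →
        ∃ F : Finset (EuclideanSpace ℝ {p : Fin (k + 1) × Fin (k + 1) // p.1 < p.2}),
          (F.card : ℝ) ≤ C' * (q : ℝ) ^ (2 * k + 1) ∧
          areaTypesE k (Eqs q s) ⊆
            ⋃ z ∈ F, Metric.closedBall z (C' * (q : ℝ) ^ (-2 / s)) := by
  set N := √(Fintype.card (AreaIdx k))
  refine ⟨3 ^ (2 * k + 1) + 12 * N, by positivity, fun s _ _ q hq => ?_⟩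
  have hq0 : 0 < q := by omega
  set δ := (q : ℝ) ^ (-2 / s)
  have hδ : 0 < δ := rpow_pos_of_pos (by exact_mod_cast hq0) _
  refine ⟨latticeCenters k q, (card_latticeCenters_le k hq0).trans ?_, ?_⟩
  · gcongr
    exact le_add_of_nonneg_right (by positivity)
  rintro v ⟨x, hxE, hv⟩
  choose u hu hux using hxE
  choose a b ha hb hdist using fun i => exists_latticePts_dist_lt hq0 (hu i).1
  have hv : v = areaType (psiMap ∘ u) := by
    ext p
    simp [hv, areaType, hux]
  have hu_le : ∀ i, |u i 0| ≤ 1 := fun i =>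
    abs_le.2 ⟨by linarith [(hu i).2.1], (hu i).2.2.1⟩
  have ha_le : ∀ i, |(a i : ℝ) / q| ≤ 1 := fun i => by
    obtain ⟨h0, hq⟩ := Finset.mem_Icc.1 (ha i)
    rw [abs_of_nonneg (div_nonneg (by exact_mod_cast h0) q.cast_nonneg), div_le_one (by positivity)]
    exact_mod_cast hq
  refine Set.mem_iUnion₂.2
    ⟨_, latticeAreaType_mem_latticeCenters ha hb, Metric.mem_closedBall.2 ?_⟩
  calc dist v (latticeAreaType q a b) ≤ N * (6 * (2 * δ)) :=
        hv ▸ dist_areaType_psiMap_le hu_le ha_le fun i => (hdist i).le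
    _ ≤ (3 ^ (2 * k + 1) + 12 * N) * δ := by
        nlinarith [pow_pos (three_pos (α := ℝ)) (2 * k + 1)]

/-- For each `k ≥ 1` there is a constant `C′_k`, depending only on `k`, such that for
every `0 < s < 2` and every `q ≥ 2`, the set of area types of `(k+1)`-point
configurations in `E_{q,s}` can be covered by at most `C′_k q^{2k+1}` Euclidean balls
of radius `C′_k q^{−2/s}`. -/
theorem statement19 (k : ℕ) (hk : 1 ≤ k) :
    ∃ C' : ℝ, 0 < C' ∧
      ∀ s : ℝ, 0 < s → s < 2 → ∀ q : ℕ, 2 ≤ q →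
        ∃ F : Finset (EuclideanSpace ℝ {p : Fin (k + 1) × Fin (k + 1) // p.1 < p.2}),
          (F.card : ℝ) ≤ C' * (q : ℝ) ^ (2 * k + 1) ∧
          areaTypesE k (Eqs q s) ⊆
            ⋃ z ∈ F, Metric.closedBall z (C' * (q : ℝ) ^ (-2 / s)) :=
  statement19_general k
end
end
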